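/- Suppose Σ ∈ P(X) is an irreducible collection of partial splits of X. Then any two split closures of Σ obtained using solely the M-rule θ_M (with (P) holding for all collections) are equal. -/

import Mathlib

/-!
Common definitions: partial splits of a finite set `X`, modelled as unordered
pairs (`Sym2`) of nonempty disjoint subsets of `X`; the `M`-, `Y`- and `Z`-
closure rules; weak compatibility; `X`-cycles and display; split closure
sequences and split closures.
-/

variable {X : Type*}

/-- `S` is a partial split of `X`: an unordered pair of nonempty disjoint subsets of `X`. -/
def IsPartialSplit (S : Sym2 (Set X)) : Prop :=
  ∃ A B : Set X, S = s(A, B) ∧ A.Nonempty ∧ B.Nonempty ∧ Disjoint A B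

/-- `S` is a full split of `X`: a partial split whose two parts cover `X`. -/
def IsFullSplit (S : Sym2 (Set X)) : Prop :=
  ∃ A B : Set X, S = s(A, B) ∧ A.Nonempty ∧ B.Nonempty ∧ Disjoint A B ∧ A ∪ B = Set.univ

/-- The partial split `S` extends the partial split `T`. -/
def SplitExtends (S T : Sym2 (Set X)) : Prop :=
  ∃ A B C D : Set X, S = s(A, B) ∧ T = s(C, D) ∧ C ⊆ A ∧ D ⊆ B

/-- `Sig ⪯ Sig'`: every partial split of `Sig` is extended by one of `Sig'`. -/
def Preceq (Sig Sig' : Set (Sym2 (Set X))) : Prop :=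
  ∀ S ∈ Sig, ∃ T ∈ Sig', SplitExtends T S

/-- `Sig⁻`: the set obtained from `Sig` by removing all redundant partial splits,
i.e. those extended by a different element of `Sig`. -/
def sreduce (Sig : Set (Sym2 (Set X))) : Set (Sym2 (Set X)) :=
  {S | S ∈ Sig ∧ ¬ ∃ T ∈ Sig, T ≠ S ∧ SplitExtends T S}

/-- `Sig ∈ P(X)`: `Sig` is an irreducible collection of partial splits of `X`. -/
def InPX (Sig : Set (Sym2 (Set X))) : Prop :=
  (∀ S ∈ Sig, IsPartialSplit S) ∧ sreduce Sig = Sig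

/-- Two partial splits are compatible if some part of one is disjoint from some part
of the other. -/
def SplitCompatible (S T : Sym2 (Set X)) : Prop :=
  ∃ A B C D : Set X, S = s(A, B) ∧ T = s(C, D) ∧ A ∩ C = ∅

/-- Weak compatibility of a (multi)triple of partial splits: for every choice of parts,
one of the four distinguished triple intersections is empty. -/
def WeaklyCompatTriple (S1 S2 S3 : Sym2 (Set X)) : Prop :=
  ∀ A1 B1 A2 B2 A3 B3 : Set X,
    S1 = s(A1, B1) → S2 = s(A2, B2) → S3 = s(A3, B3) →
    A1 ∩ A2 ∩ A3 = ∅ ∨ B1 ∩ B2 ∩ A3 = ∅ ∨ B1 ∩ A2 ∩ B3 = ∅ ∨ A1 ∩ B2 ∩ B3 = ∅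

/-- A collection of partial splits is weakly compatible if every three of its members are. -/
def WeaklyCompatible (Sig : Set (Sym2 (Set X))) : Prop :=
  ∀ S1 ∈ Sig, ∀ S2 ∈ Sig, ∀ S3 ∈ Sig, WeaklyCompatTriple S1 S2 S3

/-- Condition of the `M`-rule for the parts `A1|B1`, `A2|B2`. -/
def mCond (A1 B1 A2 B2 : Set X) : Prop :=
  (A1 ∩ A2).Nonempty ∧ (B1 ∩ B2).Nonempty

/-- Output of the `M`-rule applied with respect to the parts `A1|B1`, `A2|B2`. -/
def mOut (A1 B1 A2 B2 : Set X) : Set (Sym2 (Set X)) :=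
  {s(A1, B1), s(A2, B2), s(A1 ∩ A2, B1 ∪ B2), s(B1 ∩ B2, A1 ∪ A2)}

/-- Condition of the `Y`-rule for the parts `A1|B1`, `A2|B2`, `A3|B3`. -/
def yCond (A1 B1 A2 B2 A3 B3 : Set X) : Prop :=
  (A1 ∩ A2 ∩ A3).Nonempty ∧ (B1 ∩ B2 ∩ A3).Nonempty ∧
    (B1 ∩ A2 ∩ B3).Nonempty ∧ A1 ∩ B2 ∩ B3 = ∅

/-- Output of the `Y`-rule applied with respect to the parts `A1|B1`, `A2|B2`, `A3|B3`. -/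
def yOut (A1 B1 A2 B2 A3 B3 : Set X) : Set (Sym2 (Set X)) :=
  {s(B1 ∪ (B2 ∩ B3), A1), s(A2 ∪ (A1 ∩ B3), B2), s(A3 ∪ (A1 ∩ B2), B3)}

/-- Condition of the `Z`-rule for the parts `A1|B1`, `A2|B2`. -/
def zCond (A1 B1 A2 B2 : Set X) : Prop :=
  (A1 ∩ A2).Nonempty ∧ (A2 ∩ B1).Nonempty ∧ (B1 ∩ B2).Nonempty ∧ A1 ∩ B2 = ∅

/-- Output of the `Z`-rule applied with respect to the parts `A1|B1`, `A2|B2`. -/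
def zOut (A1 B1 A2 B2 : Set X) : Set (Sym2 (Set X)) :=
  {s(B1 ∪ B2, A1), s(B2, A1 ∪ A2)}

/-- `Sig'` is obtained from `Sig` by a single application of the `Y`-rule. -/
def yStep (Sig Sig' : Set (Sym2 (Set X))) : Prop :=
  ∃ A1 B1 A2 B2 A3 B3 : Set X,
    s(A1, B1) ∈ Sig ∧ s(A2, B2) ∈ Sig ∧ s(A3, B3) ∈ Sig ∧
    s(A1, B1) ≠ s(A2, B2) ∧ s(A1, B1) ≠ s(A3, B3) ∧ s(A2, B2) ≠ s(A3, B3) ∧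
    yCond A1 B1 A2 B2 A3 B3 ∧
    Sig' = sreduce (Sig ∪ yOut A1 B1 A2 B2 A3 B3)

/-- `Sig'` is obtained from `Sig` by a single application of the `M`-rule. -/
def mStep (Sig Sig' : Set (Sym2 (Set X))) : Prop :=
  ∃ A1 B1 A2 B2 : Set X,
    s(A1, B1) ∈ Sig ∧ s(A2, B2) ∈ Sig ∧ s(A1, B1) ≠ s(A2, B2) ∧
    mCond A1 B1 A2 B2 ∧
    Sig' = sreduce (Sig ∪ mOut A1 B1 A2 B2)

/-- `Sig'` is obtained from `Sig` by a single non-trivial application of the `Y`-rule. -/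
def yStepNT (Sig Sig' : Set (Sym2 (Set X))) : Prop :=
  ∃ A1 B1 A2 B2 A3 B3 : Set X,
    s(A1, B1) ∈ Sig ∧ s(A2, B2) ∈ Sig ∧ s(A3, B3) ∈ Sig ∧
    s(A1, B1) ≠ s(A2, B2) ∧ s(A1, B1) ≠ s(A3, B3) ∧ s(A2, B2) ≠ s(A3, B3) ∧
    yCond A1 B1 A2 B2 A3 B3 ∧
    ¬ Preceq (sreduce (yOut A1 B1 A2 B2 A3 B3)) Sig ∧
    Sig' = sreduce (Sig ∪ yOut A1 B1 A2 B2 A3 B3)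

/-- `Sig'` is obtained from `Sig` by a single non-trivial application of the `M`-rule. -/
def mStepNT (Sig Sig' : Set (Sym2 (Set X))) : Prop :=
  ∃ A1 B1 A2 B2 : Set X,
    s(A1, B1) ∈ Sig ∧ s(A2, B2) ∈ Sig ∧ s(A1, B1) ≠ s(A2, B2) ∧
    mCond A1 B1 A2 B2 ∧
    ¬ Preceq (sreduce (mOut A1 B1 A2 B2)) Sig ∧
    Sig' = sreduce (Sig ∪ mOut A1 B1 A2 B2)

/-- `Sig` is closed under the `Y`-rule: every application of the `Y`-rule to `Sig` is trivial. -/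
def yClosed (Sig : Set (Sym2 (Set X))) : Prop :=
  ∀ A1 B1 A2 B2 A3 B3 : Set X,
    s(A1, B1) ∈ Sig → s(A2, B2) ∈ Sig → s(A3, B3) ∈ Sig →
    s(A1, B1) ≠ s(A2, B2) → s(A1, B1) ≠ s(A3, B3) → s(A2, B2) ≠ s(A3, B3) →
    yCond A1 B1 A2 B2 A3 B3 →
    Preceq (sreduce (yOut A1 B1 A2 B2 A3 B3)) Sig

/-- `Sig` is closed under the `M`-rule: every application of the `M`-rule to `Sig` is trivial. -/
def mClosed (Sig : Set (Sym2 (Set X))) : Prop :=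
  ∀ A1 B1 A2 B2 : Set X,
    s(A1, B1) ∈ Sig → s(A2, B2) ∈ Sig → s(A1, B1) ≠ s(A2, B2) →
    mCond A1 B1 A2 B2 →
    Preceq (sreduce (mOut A1 B1 A2 B2)) Sig

/-- A split closure sequence for `Sig` of length `n` with respect to the property `P` and
the non-trivial single-application relation `stepNT`: a strictly `⪯`-increasing sequence
in `P(X)` starting at `Sig` in which every term satisfying `P` is followed by the result
of one non-trivial application of the rule. -/
def IsClosureSeq (P : Set (Sym2 (Set X)) → Prop)
    (stepNT : Set (Sym2 (Set X)) → Set (Sym2 (Set X)) → Prop)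
    (Sig : Set (Sym2 (Set X))) (n : ℕ) (f : ℕ → Set (Sym2 (Set X))) : Prop :=
  f 0 = Sig ∧ (∀ i ≤ n, InPX (f i)) ∧
    (∀ i < n, P (f i) ∧ stepNT (f i) (f (i + 1)) ∧
      Preceq (f i) (f (i + 1)) ∧ f i ≠ f (i + 1))

/-- `cl` is a split closure of `Sig` (with `cl = none` playing the role of `ω`):
the last element of a split closure sequence for `Sig`, which either satisfies `P` and is
closed under the rule, or fails `P`, in which case it is replaced by `ω`. -/
def IsSplitClosure (P : Set (Sym2 (Set X)) → Prop)
    (stepNT : Set (Sym2 (Set X)) → Set (Sym2 (Set X)) → Prop)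
    (closed : Set (Sym2 (Set X)) → Prop)
    (Sig : Set (Sym2 (Set X))) (cl : Option (Set (Sym2 (Set X)))) : Prop :=
  ∃ (n : ℕ) (f : ℕ → Set (Sym2 (Set X))),
    IsClosureSeq P stepNT Sig n f ∧
    ((P (f n) ∧ closed (f n) ∧ cl = some (f n)) ∨ (¬ P (f n) ∧ cl = none))

/-- Split closure with respect to the `Y`-rule, `(P)` being weak compatibility. -/
def IsYClosure (Sig : Set (Sym2 (Set X))) (cl : Option (Set (Sym2 (Set X)))) : Prop :=
  IsSplitClosure WeaklyCompatible yStepNT yClosed Sig cl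

/-- Split closure with respect to the `M`-rule, `(P)` holding for all collections. -/
def IsMClosure (Sig : Set (Sym2 (Set X))) (cl : Option (Set (Sym2 (Set X)))) : Prop :=
  IsSplitClosure (fun _ => True) mStepNT mClosed Sig cl

/-- Split closure with respect to the combined `M/Y`-rule, `(P)` being weak compatibility. -/
def IsMYClosure (Sig : Set (Sym2 (Set X))) (cl : Option (Set (Sym2 (Set X)))) : Prop :=
  IsSplitClosure WeaklyCompatible
    (fun s s' => mStepNT s s' ∨ yStepNT s s') (fun s => mClosed s ∧ yClosed s) Sig cl

/-- `C` is an `X`-cycle: a connected graph on the vertex set `X` (`|X| ≥ 3`) in which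
every vertex has degree `2`. -/
def IsXCycle (C : SimpleGraph X) : Prop :=
  C.Connected ∧ 3 ≤ Nat.card X ∧ ∀ v : X, (C.neighborSet v).ncard = 2

/-- The partial split `S` is displayed by the `X`-cycle `C`: there are two distinct
edges of `C` whose deletion leaves one component containing one part of `S` and
another component containing the other part. -/
def DisplaysSplit (C : SimpleGraph X) (S : Sym2 (Set X)) : Prop :=
  ∃ A B : Set X, S = s(A, B) ∧
    ∃ e1 e2 : Sym2 X, e1 ∈ C.edgeSet ∧ e2 ∈ C.edgeSet ∧ e1 ≠ e2 ∧
      ∃ c1 c2 : (C.deleteEdges {e1, e2}).ConnectedComponent,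
        c1 ≠ c2 ∧ A ⊆ c1.supp ∧ B ⊆ c2.supp

/-- A collection of partial splits is displayed by `C` if each of its members is. -/
def DisplaysColl (C : SimpleGraph X) (Sig : Set (Sym2 (Set X))) : Prop :=
  ∀ S ∈ Sig, DisplaysSplit C S

/-- `cl ≠ ω` and the underlying collection is displayed by `C`. -/
def OptionDisplays (C : SimpleGraph X) (cl : Option (Set (Sym2 (Set X)))) : Prop :=
  ∃ Sig, cl = some Sig ∧ DisplaysColl C Sig

/-- The ground set `A ∪ B` of a partial split `A|B`. -/
def splitGround (S : Sym2 (Set X)) : Set X :=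
  ⋃₀ {A : Set X | A ∈ S}

/-- Membership in `P_ω(X) = P(X) ∪ {ω}`. -/
def InPOmega (x : Option (Set (Sym2 (Set X)))) : Prop :=
  x = none ∨ ∃ Sig, x = some Sig ∧ InPX Sig

/-- The order `⪯` on `P_ω(X)`, with `Sig ⪯ ω` for all `Sig` and `ω ⪯ ω`. -/
def PreceqO (x y : Option (Set (Sym2 (Set X)))) : Prop :=
  y = none ∨ ∃ Sig Sig', x = some Sig ∧ y = some Sig' ∧ Preceq Sig Sig'

/-- Split closure as a relation on `P_ω(X)`, with `⟨ω⟩ = ω`. -/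
def ClosO (cls : Set (Sym2 (Set X)) → Option (Set (Sym2 (Set X))) → Prop)
    (x y : Option (Set (Sym2 (Set X)))) : Prop :=
  (x = none ∧ y = none) ∨ ∃ Sig, x = some Sig ∧ cls Sig y

/-!
An application of the `M`-rule is monotone in the two splits it is applied to. So if both
are extended by members of an `M`-closed collection `Θ` of partial splits, so is everything
the application produces, and every term of a split closure sequence for `Σ` stays `⪯ Θ`
once `Σ ⪯ Θ`. Two split closures `Σ₁`, `Σ₂` of `Σ` are `M`-closed and satisfy `Σ ⪯ Σᵢ`,
hence `Σ₁ ⪯ Σ₂ ⪯ Σ₁`, and `⪯` is antisymmetric on irreducible collections.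
-/

open Set

lemma splitExtends_mk_iff {T : Sym2 (Set X)} {A B : Set X} :
    SplitExtends T s(A, B) ↔ ∃ C D, T = s(C, D) ∧ A ⊆ C ∧ B ⊆ D := by
  constructor
  · rintro ⟨C, D, A', B', rfl, hAB, hC, hD⟩
    rcases Sym2.eq_iff.1 hAB with ⟨rfl, rfl⟩ | ⟨rfl, rfl⟩
    · exact ⟨C, D, rfl, hC, hD⟩
    · exact ⟨D, C, Sym2.eq_swap, hD, hC⟩
  · rintro ⟨C, D, rfl, hC, hD⟩
    exact ⟨C, D, A, B, rfl, rfl, hC, hD⟩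

lemma SplitExtends.refl (S : Sym2 (Set X)) : SplitExtends S S := by
  induction S using Sym2.inductionOn with
  | hf A B => exact ⟨A, B, A, B, rfl, rfl, subset_rfl, subset_rfl⟩

lemma SplitExtends.trans {S T U : Sym2 (Set X)}
    (hST : SplitExtends S T) (hTU : SplitExtends T U) : SplitExtends S U := by
  obtain ⟨C, D, E, F, rfl, rfl, hEC, hFD⟩ := hTU
  obtain ⟨A, B, rfl, hCA, hDB⟩ := splitExtends_mk_iff.1 hST
  exact ⟨A, B, E, F, rfl, rfl, hEC.trans hCA, hFD.trans hDB⟩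

lemma SplitExtends.antisymm {S T : Sym2 (Set X)}
    (hST : SplitExtends S T) (hTS : SplitExtends T S) : S = T := by
  induction T using Sym2.inductionOn with
  | hf C D =>
    obtain ⟨A, B, rfl, hCA, hDB⟩ := splitExtends_mk_iff.1 hST
    obtain ⟨C', D', hCD, hAC, hBD⟩ := splitExtends_mk_iff.1 hTS
    rcases Sym2.eq_iff.1 hCD with ⟨rfl, rfl⟩ | ⟨rfl, rfl⟩
    · rw [hCA.antisymm hAC, hDB.antisymm hBD]
    · rw [hCA.antisymm ((hAC.trans hDB).trans hBD), hDB.antisymm ((hBD.trans hCA).trans hAC)]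

lemma IsPartialSplit.disjoint {C D : Set X} (h : IsPartialSplit s(C, D)) : Disjoint C D := by
  obtain ⟨A, B, hAB, -, -, hdisj⟩ := h
  rcases Sym2.eq_iff.1 hAB with ⟨rfl, rfl⟩ | ⟨rfl, rfl⟩
  · exact hdisj
  · exact hdisj.symm

lemma Preceq.refl (Sig : Set (Sym2 (Set X))) : Preceq Sig Sig :=
  fun S hS => ⟨S, hS, SplitExtends.refl S⟩

lemma Preceq.trans {Sig₁ Sig₂ Sig₃ : Set (Sym2 (Set X))}
    (h₁₂ : Preceq Sig₁ Sig₂) (h₂₃ : Preceq Sig₂ Sig₃) : Preceq Sig₁ Sig₃ := by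
  intro S hS
  obtain ⟨T, hT, hTS⟩ := h₁₂ S hS
  obtain ⟨U, hU, hUT⟩ := h₂₃ T hT
  exact ⟨U, hU, hUT.trans hTS⟩

lemma Preceq.of_subset {Sig Sig' : Set (Sym2 (Set X))} (h : Sig ⊆ Sig') : Preceq Sig Sig' :=
  fun S hS => ⟨S, h hS, SplitExtends.refl S⟩

lemma sreduce_subset (Sig : Set (Sym2 (Set X))) : sreduce Sig ⊆ Sig :=
  fun _ hS => hS.1

/-- In a finite collection, a split extending `S` that is maximal for extension survives
the reduction. -/
lemma preceq_sreduce {Sig : Set (Sym2 (Set X))} (hfin : Sig.Finite) :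
    Preceq Sig (sreduce Sig) := by
  intro S hS
  obtain ⟨T, ⟨hT, hTS⟩, hmax⟩ := Finite.exists_maximalFor
    (fun T => {U : Sym2 (Set X) | SplitExtends T U}) {T ∈ Sig | SplitExtends T S}
    (hfin.subset fun _ hT => hT.1) ⟨S, hS, SplitExtends.refl S⟩
  refine ⟨T, ⟨hT, ?_⟩, hTS⟩
  rintro ⟨U, hU, hUT, hext⟩
  have hdown : {V | SplitExtends U V} ⊆ {V | SplitExtends T V} :=
    hmax ⟨hU, hext.trans hTS⟩ fun _ hV => hext.trans hV
  exact hUT (hext.antisymm (hdown (SplitExtends.refl U)))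

lemma subset_of_preceq_of_preceq {Sig Sig' : Set (Sym2 (Set X))} (hirr : sreduce Sig = Sig)
    (h : Preceq Sig Sig') (h' : Preceq Sig' Sig) : Sig ⊆ Sig' := by
  intro S hS
  obtain ⟨T, hT, hTS⟩ := h S hS
  obtain ⟨U, hU, hUT⟩ := h' T hT
  have hUS : U = S := by
    by_contra hne
    exact (hirr.symm ▸ hS : S ∈ sreduce Sig).2 ⟨U, hU, hne, hUT.trans hTS⟩
  rwa [hTS.antisymm (hUS ▸ hUT)] at hT

lemma Preceq.antisymm {Sig Sig' : Set (Sym2 (Set X))}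
    (hirr : sreduce Sig = Sig) (hirr' : sreduce Sig' = Sig')
    (h : Preceq Sig Sig') (h' : Preceq Sig' Sig) : Sig = Sig' :=
  (subset_of_preceq_of_preceq hirr h h').antisymm (subset_of_preceq_of_preceq hirr' h' h)

lemma mOut_finite (A1 B1 A2 B2 : Set X) : (mOut A1 B1 A2 B2).Finite := by
  unfold mOut
  exact toFinite _

lemma mOut_self (C D : Set X) : mOut C D C D = {s(C, D)} := by
  simp only [mOut, inter_self, union_self, Sym2.eq_swap (a := D), insert_eq_of_mem,
    mem_singleton_iff]

lemma mOut_preceq_mOut {A1 B1 A2 B2 C1 D1 C2 D2 : Set X}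
    (hA1 : A1 ⊆ C1) (hB1 : B1 ⊆ D1) (hA2 : A2 ⊆ C2) (hB2 : B2 ⊆ D2) :
    Preceq (mOut A1 B1 A2 B2) (mOut C1 D1 C2 D2) := by
  rintro S (rfl | rfl | rfl | rfl)
  · exact ⟨s(C1, D1), by simp [mOut], splitExtends_mk_iff.2 ⟨_, _, rfl, hA1, hB1⟩⟩
  · exact ⟨s(C2, D2), by simp [mOut], splitExtends_mk_iff.2 ⟨_, _, rfl, hA2, hB2⟩⟩
  · exact ⟨s(C1 ∩ C2, D1 ∪ D2), by simp [mOut],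
      splitExtends_mk_iff.2 ⟨_, _, rfl, inter_subset_inter hA1 hA2, union_subset_union hB1 hB2⟩⟩
  · exact ⟨s(D1 ∩ D2, C1 ∪ C2), by simp [mOut],
      splitExtends_mk_iff.2 ⟨_, _, rfl, inter_subset_inter hB1 hB2, union_subset_union hA1 hA2⟩⟩

lemma preceq_mOut_of_mClosed {Th : Set (Sym2 (Set X))} (hsplit : ∀ S ∈ Th, IsPartialSplit S)
    (hclosed : mClosed Th) {A1 B1 A2 B2 : Set X}
    (h1 : ∃ T ∈ Th, SplitExtends T s(A1, B1)) (h2 : ∃ T ∈ Th, SplitExtends T s(A2, B2))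
    (hcond : mCond A1 B1 A2 B2) : Preceq (mOut A1 B1 A2 B2) Th := by
  obtain ⟨_, hT1, hext1⟩ := h1
  obtain ⟨C1, D1, rfl, hAC1, hBD1⟩ := splitExtends_mk_iff.1 hext1
  obtain ⟨_, hT2, hext2⟩ := h2
  obtain ⟨C2, D2, rfl, hAC2, hBD2⟩ := splitExtends_mk_iff.1 hext2
  have hcond' : mCond C1 D1 C2 D2 :=
    ⟨hcond.1.mono (inter_subset_inter hAC1 hAC2), hcond.2.mono (inter_subset_inter hBD1 hBD2)⟩
  refine (mOut_preceq_mOut hAC1 hBD1 hAC2 hBD2).trans ?_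
  by_cases heq : s(C1, D1) = s(C2, D2)
  · rcases Sym2.eq_iff.1 heq with ⟨rfl, rfl⟩ | ⟨rfl, rfl⟩
    · rw [mOut_self]
      exact Preceq.of_subset (singleton_subset_iff.2 hT1)
    · exact absurd (hsplit _ hT1).disjoint (not_disjoint_iff_nonempty_inter.2 hcond'.1)
  · exact (preceq_sreduce (mOut_finite _ _ _ _)).trans (hclosed _ _ _ _ hT1 hT2 heq hcond')

lemma Preceq.of_mStep {Sig Sig' Th : Set (Sym2 (Set X))} (hsplit : ∀ S ∈ Th, IsPartialSplit S)
    (hclosed : mClosed Th) (hpre : Preceq Sig Th) (hstep : mStep Sig Sig') : Preceq Sig' Th := by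
  obtain ⟨A1, B1, A2, B2, h1, h2, -, hcond, rfl⟩ := hstep
  have hout := preceq_mOut_of_mClosed hsplit hclosed (hpre _ h1) (hpre _ h2) hcond
  exact (Preceq.of_subset (sreduce_subset _)).trans fun S hS => hS.elim (hpre S) (hout S)

lemma mStep_of_mStepNT {Sig Sig' : Set (Sym2 (Set X))} (h : mStepNT Sig Sig') : mStep Sig Sig' :=
  let ⟨A1, B1, A2, B2, h1, h2, hne, hcond, _, hSig'⟩ := h
  ⟨A1, B1, A2, B2, h1, h2, hne, hcond, hSig'⟩

section ClosureSeq

variable {P : Set (Sym2 (Set X)) → Prop} {stepNT : Set (Sym2 (Set X)) → Set (Sym2 (Set X)) → Prop}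
  {Sig : Set (Sym2 (Set X))} {n : ℕ} {f : ℕ → Set (Sym2 (Set X))}

lemma IsClosureSeq.last_induction (hseq : IsClosureSeq P stepNT Sig n f)
    (Q : Set (Sym2 (Set X)) → Prop) (h0 : Q Sig)
    (hstep : ∀ S S', stepNT S S' → Preceq S S' → Q S → Q S') : Q (f n) := by
  obtain ⟨rfl, -, hsucc⟩ := hseq
  suffices ∀ i ≤ n, Q (f i) from this n le_rfl
  intro i hi
  induction i with
  | zero => exact h0
  | succ i ih =>
    obtain ⟨-, hNT, hpre, -⟩ := hsucc i hi
    exact hstep _ _ hNT hpre (ih (Nat.le_of_succ_le hi))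

lemma IsClosureSeq.preceq_last (hseq : IsClosureSeq P stepNT Sig n f) : Preceq Sig (f n) :=
  hseq.last_induction (Preceq Sig) (Preceq.refl Sig) fun _ _ _ hpre h => h.trans hpre

lemma IsClosureSeq.last_preceq_of_mClosed (hseq : IsClosureSeq P mStepNT Sig n f)
    {Th : Set (Sym2 (Set X))} (hsplit : ∀ S ∈ Th, IsPartialSplit S) (hclosed : mClosed Th)
    (hpre : Preceq Sig Th) : Preceq (f n) Th :=
  hseq.last_induction (Preceq · Th) hpre fun _ _ hNT _ h =>
    h.of_mStep hsplit hclosed (mStep_of_mStepNT hNT)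

end ClosureSeq

/-- Since `(P)` holds for every collection, an `M`-closure is never `ω`. -/
lemma IsMClosure.exists_eq_some {Sig : Set (Sym2 (Set X))} {cl : Option (Set (Sym2 (Set X)))}
    (h : IsMClosure Sig cl) : ∃ (n : ℕ) (f : ℕ → Set (Sym2 (Set X))),
      IsClosureSeq (fun _ => True) mStepNT Sig n f ∧ InPX (f n) ∧ mClosed (f n) ∧
        cl = some (f n) := by
  obtain ⟨n, f, hseq, ⟨-, hclosed, rfl⟩ | ⟨hP, -⟩⟩ := h
  · exact ⟨n, f, hseq, hseq.2.1 n le_rfl, hclosed, rfl⟩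
  · exact absurd trivial hP

theorem statement12_general {X : Type*} (Sig : Set (Sym2 (Set X)))
    (cl1 cl2 : Option (Set (Sym2 (Set X))))
    (h1 : IsMClosure Sig cl1) (h2 : IsMClosure Sig cl2) :
    cl1 = cl2 := by
  obtain ⟨n1, f1, hseq1, hPX1, hclosed1, rfl⟩ := h1.exists_eq_some
  obtain ⟨n2, f2, hseq2, hPX2, hclosed2, rfl⟩ := h2.exists_eq_some
  have h12 := hseq1.last_preceq_of_mClosed hPX2.1 hclosed2 hseq2.preceq_last
  have h21 := hseq2.last_preceq_of_mClosed hPX1.1 hclosed1 hseq1.preceq_last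
  rw [h12.antisymm hPX1.2 hPX2.2 h21]

/-- for `Σ ∈ P(X)`, any two split closures of `Σ` obtained solely via the
`M`-rule (with `(P)` holding for all collections) are equal. -/
theorem statement12 {X : Type*} [Fintype X] (Sig : Set (Sym2 (Set X)))
    (hPX : InPX Sig)
    (cl1 cl2 : Option (Set (Sym2 (Set X))))
    (h1 : IsMClosure Sig cl1) (h2 : IsMClosure Sig cl2) :
    cl1 = cl2 :=
  statement12_general Sig cl1 cl2 h1 h2
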